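/- arXiv:2106.10993 — 6 statements merged into one kernel-verified Lean document; each statement's English description precedes it below -/
import Mathlib

section
/- The cycles of the l-th elongation M^(l) of a matroid M are exactly the cycles of M of nullity 0 or of nullity greater than l, where a cycle of nullity i in M^(l) of nullity i corresponds to a cycle of nullity i + l in M. Equivalently: a subset X ⊆ E is a cycle of M^(l) of positive nullity j if and only if X is a cycle of M of nullity j + l. -/
/-- The nullity function `n(X) = |X| - r(X)` of a matroid rank function. -/
def matNullity {E : Type*} (r : Finset E → ℕ) (X : Finset E) : ℕ :=
  X.card - r X

/-- `X` is a cycle of nullity `i`: it has nullity `i` and is minimal (w.r.t.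
inclusion) among subsets of nullity `i`. -/
def IsCycleOfNullity {E : Type*} (r : Finset E → ℕ) (X : Finset E) (i : ℕ) : Prop :=
  matNullity r X = i ∧ ∀ Y ⊆ X, matNullity r Y = i → Y = X

/-- a subset `X ⊆ E` is a cycle of the `l`-th elongation `M^(l)`
of positive nullity `j` if and only if `X` is a cycle of `M` of nullity `j + l`. -/
theorem stmt_4 {E : Type*} [Fintype E] [DecidableEq E] (r : Finset E → ℕ) (l : ℕ)
    (hR1 : ∀ X : Finset E, r X ≤ X.card)
    (hR2 : ∀ X Y : Finset E, X ⊆ Y → r X ≤ r Y)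
    (hR3 : ∀ X Y : Finset E, r (X ∩ Y) + r (X ∪ Y) ≤ r X + r Y)
    (hl : l ≤ Fintype.card E - r Finset.univ) :
    ∀ (X : Finset E) (j : ℕ), 0 < j →
      (IsCycleOfNullity (fun Y => min Y.card (r Y + l)) X j ↔
        IsCycleOfNullity r X (j + l)) := by
  intro X j hj
  have key : ∀ Y : Finset E, matNullity (fun Y => min Y.card (r Y + l)) Y
      = matNullity r Y - l := by
    intro Y
    have := hR1 Y
    simp only [matNullity]
    omega
  constructor
  · rintro ⟨h1, h2⟩
    rw [key] at h1
    refine ⟨by omega, fun Y hY hn => h2 Y hY ?_⟩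
    rw [key, hn]; omega
  · rintro ⟨h1, h2⟩
    refine ⟨by rw [key, h1]; omega, fun Y hY hn => h2 Y hY ?_⟩
    rw [key] at hn; omega
end

section
/- Let ρ : Σ(E) → ℕ be a (q,m)-polymatroid rank function on E = F_q^n, where Σ(E) is the set of all F_q-subspaces of E. Define ρ*(X) := m·dim(X) + ρ(X^⊥) - ρ(E), where X^⊥ is the orthogonal complement of X with respect to the standard dot product. Then ρ* is also a (q,m)-polymatroid rank function. -/
/-- The orthogonal complement of a subspace of `F_q^n` with respect to the
standard dot product. -/
def perp {Fq : Type*} [Field Fq] {n : ℕ} (X : Submodule Fq (Fin n → Fq)) :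
    Submodule Fq (Fin n → Fq) where
  carrier := {v | ∀ u ∈ X, dotProduct v u = 0}
  add_mem' := by
    intro a b ha hb u hu
    simp [add_dotProduct, ha u hu, hb u hu]
  zero_mem' := by
    intro u hu
    simp
  smul_mem' := by
    intro c a ha u hu
    simp [smul_dotProduct, ha u hu]

section Aux
open Module LinearMap

variable {Fq : Type*} [Field Fq] {n : ℕ}

/-- auxiliary: the dot product as a bilinear form. -/
noncomputable def dotBilin : LinearMap.BilinForm Fq (Fin n → Fq) :=
  LinearMap.mk₂ Fq dotProduct
    (fun a b c => add_dotProduct a b c)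
    (fun r a b => smul_dotProduct r a b)
    (fun a b c => dotProduct_add a b c)
    (fun r a b => dotProduct_smul r a b)

lemma dotBilin_apply (u v : Fin n → Fq) : dotBilin u v = dotProduct u v := rfl

lemma dotBilin_isRefl : (dotBilin (Fq := Fq) (n := n)).IsRefl := by
  intro u v h
  rwa [dotBilin_apply, dotProduct_comm] at h

lemma dotBilin_nondeg : (dotBilin (Fq := Fq) (n := n)).Nondegenerate := by
  refine ⟨fun v h => ?_, fun v h => ?_⟩
  · funext i
    have := h (Pi.single i 1)
    rwa [dotBilin_apply, dotProduct_single, mul_one] at this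
  · funext i
    have := h (Pi.single i 1)
    rwa [dotBilin_apply, single_dotProduct, one_mul] at this

lemma perp_eq (X : Submodule Fq (Fin n → Fq)) : perp X = dotBilin.orthogonal X := by
  ext v
  constructor
  · intro hv u hu
    have := hv u hu
    rwa [dotBilin_apply, dotProduct_comm]
  · intro hv u hu
    have := hv u hu
    rwa [dotBilin_apply, dotProduct_comm] at this

lemma finrank_perp (X : Submodule Fq (Fin n → Fq)) :
    finrank Fq (perp X) = n - finrank Fq X := by
  rw [perp_eq, LinearMap.BilinForm.finrank_orthogonal dotBilin_nondeg]
  simp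

lemma perp_antitone {X Y : Submodule Fq (Fin n → Fq)} (h : X ≤ Y) : perp Y ≤ perp X := by
  rw [perp_eq, perp_eq]; exact LinearMap.BilinForm.orthogonal_le h

lemma perp_sup (X Y : Submodule Fq (Fin n → Fq)) : perp (X ⊔ Y) = perp X ⊓ perp Y := by
  ext v
  simp only [Submodule.mem_inf]
  constructor
  · intro h
    exact ⟨fun u hu => h u (le_sup_left (a := X) (b := Y) hu),
           fun u hu => h u (le_sup_right (a := X) (b := Y) hu)⟩
  · rintro ⟨h1, h2⟩ u hu
    obtain ⟨a, ha, b, hb, rfl⟩ := Submodule.mem_sup.mp hu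
    rw [dotProduct_add, h1 a ha, h2 b hb, add_zero]

lemma perp_perp (X : Submodule Fq (Fin n → Fq)) : perp (perp X) = X := by
  rw [perp_eq, perp_eq,
    LinearMap.BilinForm.orthogonal_orthogonal dotBilin_nondeg dotBilin_isRefl]

lemma perp_inf (X Y : Submodule Fq (Fin n → Fq)) : perp (X ⊓ Y) = perp X ⊔ perp Y := by
  conv_lhs => rw [← perp_perp X, ← perp_perp Y, ← perp_sup, perp_perp]

lemma rho_le_of_le (ρ : Submodule Fq (Fin n → Fq) → ℕ) {m : ℕ}
    (hP1 : ∀ X, ρ X ≤ m * finrank Fq X)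
    (hP3 : ∀ X Y, ρ (X ⊔ Y) + ρ (X ⊓ Y) ≤ ρ X + ρ Y)
    {A B : Submodule Fq (Fin n → Fq)} (h : A ≤ B) :
    ρ B ≤ ρ A + m * (finrank Fq B - finrank Fq A) := by
  generalize hd : finrank Fq B - finrank Fq A = d
  induction d generalizing A with
  | zero =>
    have hle : finrank Fq B ≤ finrank Fq A := by
      have := Submodule.finrank_mono h; omega
    rw [Submodule.eq_of_le_of_finrank_le h hle]
    simp
  | succ d ih =>
    have hne : A ≠ B := by
      rintro rfl; omega
    obtain ⟨v, hvB, hvA⟩ := SetLike.exists_of_lt (lt_of_le_of_ne h hne)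
    have hv0 : v ≠ 0 := fun hv => hvA (hv ▸ A.zero_mem)
    set A' := A ⊔ (Fq ∙ v) with hA'
    have hA'B : A' ≤ B := sup_le h ((Submodule.span_singleton_le_iff_mem v B).mpr hvB)
    have hlt : A < A' := by
      refine lt_of_le_of_ne le_sup_left fun hEq => hvA ?_
      rw [hEq]
      exact Submodule.mem_sup_right (Submodule.mem_span_singleton_self v)
    have h1 : finrank Fq A < finrank Fq A' := Submodule.finrank_lt_finrank_of_lt hlt
    have h2 : finrank Fq A' ≤ finrank Fq A + 1 := by
      have := Submodule.finrank_sup_add_finrank_inf_eq A (Fq ∙ v)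
      have hs : finrank Fq (Fq ∙ v) = 1 := finrank_span_singleton hv0
      rw [hA']
      omega
    have hA'rank : finrank Fq A' = finrank Fq A + 1 := by omega
    have hrec := ih hA'B (by omega)
    have hstep : ρ A' ≤ ρ A + m := by
      have h4 := hP3 A (Fq ∙ v)
      have h5 := hP1 (Fq ∙ v)
      rw [finrank_span_singleton hv0] at h5
      rw [hA']
      omega
    calc ρ B ≤ ρ A' + m * d := hrec
      _ ≤ ρ A + m + m * d := by omega
      _ = ρ A + m * (d + 1) := by ring

lemma finrank_le_n (X : Submodule Fq (Fin n → Fq)) : finrank Fq X ≤ n := by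
  have := Submodule.finrank_le X
  simpa using this

lemma rho_top_le (ρ : Submodule Fq (Fin n → Fq) → ℕ) {m : ℕ}
    (hP1 : ∀ X, ρ X ≤ m * finrank Fq X)
    (hP3 : ∀ X Y, ρ (X ⊔ Y) + ρ (X ⊓ Y) ≤ ρ X + ρ Y)
    (X : Submodule Fq (Fin n → Fq)) :
    ρ ⊤ ≤ m * finrank Fq X + ρ (perp X) := by
  have h := rho_le_of_le ρ hP1 hP3 (le_top (a := perp X))
  have h1 : finrank Fq (⊤ : Submodule Fq (Fin n → Fq)) = n := by
    simp [finrank_top]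
  have h2 := finrank_perp X
  have h3 := finrank_le_n X
  have : finrank Fq (⊤ : Submodule Fq (Fin n → Fq)) - finrank Fq (perp X)
      = finrank Fq X := by omega
  rw [this] at h
  omega

end Aux

open Module in
/-- if `ρ` is a `(q,m)`-polymatroid rank function on `F_q^n`, then
`ρ*(X) := m·dim X + ρ(X^⊥) - ρ(E)` is also a `(q,m)`-polymatroid rank function. -/
theorem stmt_5 {Fq : Type*} [Field Fq] [Fintype Fq] {n m : ℕ}
    (ρ : Submodule Fq (Fin n → Fq) → ℕ)
    (hP1 : ∀ X, ρ X ≤ m * Module.finrank Fq ↥X)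
    (hP2 : ∀ X Y, X ≤ Y → ρ X ≤ ρ Y)
    (hP3 : ∀ X Y, ρ (X ⊔ Y) + ρ (X ⊓ Y) ≤ ρ X + ρ Y) :
    (∀ X : Submodule Fq (Fin n → Fq), m * Module.finrank Fq ↥X + ρ (perp X) - ρ ⊤ ≤ m * Module.finrank Fq ↥X) ∧
    (∀ X Y : Submodule Fq (Fin n → Fq), X ≤ Y →
      m * Module.finrank Fq ↥X + ρ (perp X) - ρ ⊤ ≤
        m * Module.finrank Fq ↥Y + ρ (perp Y) - ρ ⊤) ∧
    (∀ X Y : Submodule Fq (Fin n → Fq),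
      (m * Module.finrank Fq ↥(X ⊔ Y) + ρ (perp (X ⊔ Y)) - ρ ⊤) +
        (m * Module.finrank Fq ↥(X ⊓ Y) + ρ (perp (X ⊓ Y)) - ρ ⊤) ≤
      (m * Module.finrank Fq ↥X + ρ (perp X) - ρ ⊤) +
        (m * Module.finrank Fq ↥Y + ρ (perp Y) - ρ ⊤)) := by
  have hkey := rho_top_le ρ hP1 hP3
  refine ⟨?_, ?_, ?_⟩
  · intro X
    have := hP2 (perp X) ⊤ le_top
    omega
  · intro X Y hXY
    have h := rho_le_of_le ρ hP1 hP3 (perp_antitone hXY)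
    have h1 := finrank_perp X
    have h2 := finrank_perp Y
    have h3 := finrank_le_n X
    have h4 := finrank_le_n Y
    have h5 := Submodule.finrank_mono hXY
    obtain ⟨e, he⟩ := Nat.exists_eq_add_of_le h5
    have hd : finrank Fq (perp X) - finrank Fq (perp Y) = e := by omega
    rw [hd] at h
    rw [he, Nat.mul_add]
    omega
  · intro X Y
    have hdim : finrank Fq ↥(X ⊔ Y) + finrank Fq ↥(X ⊓ Y)
        = finrank Fq X + finrank Fq Y := Submodule.finrank_sup_add_finrank_inf_eq X Y
    have hsub := hP3 (perp X) (perp Y)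
    rw [← perp_inf, ← perp_sup] at hsub
    have k1 := hkey (X ⊔ Y)
    have k2 := hkey (X ⊓ Y)
    have k3 := hkey X
    have k4 := hkey Y
    have hm : m * finrank Fq ↥(X ⊔ Y) + m * finrank Fq ↥(X ⊓ Y)
        = m * finrank Fq X + m * finrank Fq Y := by
      rw [← Nat.mul_add, ← Nat.mul_add, hdim]
    omega
end

section
/- Let M = (E, ρ) be a q-matroid on E = F_q^n. Let P(E) denote the set of one-dimensional subspaces of E, and for S ⊆ P(E) define r_ρ(S) := ρ(⟨S⟩), where ⟨S⟩ is the subspace of E spanned by the lines in S. Then (P(E), r_ρ) is a matroid. -/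
/-- The projectivization `P(E)`: the set of one-dimensional subspaces of `F_q^n`. -/
def ProjLine (Fq : Type*) [Field Fq] (n : ℕ) : Type _ :=
  {L : Submodule Fq (Fin n → Fq) // Module.finrank Fq ↥L = 1}

/-- The subspace of `F_q^n` spanned by a set of lines. -/
def spanLines {Fq : Type*} [Field Fq] {n : ℕ} (S : Set (ProjLine Fq n)) :
    Submodule Fq (Fin n → Fq) :=
  ⨆ L ∈ S, (L : ProjLine Fq n).1

lemma spanLines_mono {Fq : Type*} [Field Fq] {n : ℕ} {S T : Set (ProjLine Fq n)}
    (h : S ⊆ T) : spanLines S ≤ spanLines T :=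
  iSup_le fun L => iSup_le fun hL => le_iSup₂ (f := fun L _ => (L : ProjLine Fq n).1) L (h hL)

lemma spanLines_union {Fq : Type*} [Field Fq] {n : ℕ} (S T : Set (ProjLine Fq n)) :
    spanLines (S ∪ T) = spanLines S ⊔ spanLines T := by
  simp only [spanLines]; exact iSup_union

lemma finrank_spanLines_le {Fq : Type*} [Field Fq] [Fintype Fq] {n : ℕ}
    (S : Set (ProjLine Fq n)) :
    Module.finrank Fq ↥(spanLines S) ≤ S.ncard := by
  have : Finite (Submodule Fq (Fin n → Fq)) :=
    Finite.of_injective (fun X => (X : Set (Fin n → Fq))) SetLike.coe_injective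
  have : Finite (ProjLine Fq n) := Subtype.finite
  have hfin : S.Finite := Set.toFinite S
  refine Set.Finite.induction_on (motive := fun S _ => Module.finrank Fq ↥(spanLines S) ≤ S.ncard) S hfin (by
    have h0 : spanLines (∅ : Set (ProjLine Fq n)) = ⊥ :=
      iSup₂_eq_bot.mpr (fun L hL => absurd hL (Set.notMem_empty L))
    show Module.finrank Fq ↥(spanLines (∅ : Set (ProjLine Fq n))) ≤ (∅ : Set (ProjLine Fq n)).ncard
    rw [h0]; simp) ?_
  intro a s ha hs ih
  have hspan : spanLines (insert a s) = a.1 ⊔ spanLines s := by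
    simp only [spanLines]; exact iSup_insert
  rw [hspan, Set.ncard_insert_of_notMem ha hs]
  calc Module.finrank Fq ↥(a.1 ⊔ spanLines s)
    ≤ Module.finrank Fq ↥a.1 + Module.finrank Fq ↥(spanLines s) :=
      Submodule.finrank_add_le_finrank_add_finrank _ _
    _ ≤ 1 + s.ncard := by rw [a.2]; omega
    _ = s.ncard + 1 := by omega

/-- for a `q`-matroid `(F_q^n, ρ)`, the function
`r_ρ(S) := ρ(⟨S⟩)` on subsets of `P(F_q^n)` is a matroid rank function. -/
theorem stmt_7 {Fq : Type*} [Field Fq] [Fintype Fq] {n : ℕ}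
    (ρ : Submodule Fq (Fin n → Fq) → ℕ)
    (hP1 : ∀ X, ρ X ≤ Module.finrank Fq ↥X)
    (hP2 : ∀ X Y, X ≤ Y → ρ X ≤ ρ Y)
    (hP3 : ∀ X Y, ρ (X ⊔ Y) + ρ (X ⊓ Y) ≤ ρ X + ρ Y) :
    (∀ S : Set (ProjLine Fq n), ρ (spanLines S) ≤ S.ncard) ∧
    (∀ S T : Set (ProjLine Fq n), S ⊆ T → ρ (spanLines S) ≤ ρ (spanLines T)) ∧
    (∀ S T : Set (ProjLine Fq n),
      ρ (spanLines (S ∩ T)) + ρ (spanLines (S ∪ T)) ≤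
        ρ (spanLines S) + ρ (spanLines T)) := by
  refine ⟨fun S => (hP1 _).trans (finrank_spanLines_le S),
    fun S T h => hP2 _ _ (spanLines_mono h), fun S T => ?_⟩
  have h1 : spanLines (S ∩ T) ≤ spanLines S ⊓ spanLines T :=
    le_inf (spanLines_mono Set.inter_subset_left) (spanLines_mono Set.inter_subset_right)
  calc ρ (spanLines (S ∩ T)) + ρ (spanLines (S ∪ T))
      ≤ ρ (spanLines S ⊓ spanLines T) + ρ (spanLines S ⊔ spanLines T) := by
        rw [spanLines_union]; exact Nat.add_le_add_right (hP2 _ _ h1) _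
    _ ≤ ρ (spanLines S) + ρ (spanLines T) := by
        have := hP3 (spanLines S) (spanLines T); omega
end

section
/- Let M = (E, ρ) be a q-matroid and Cl(M) = (P(E), r_ρ) the associated classical matroid with r_ρ(S) = ρ(⟨S⟩). A subset S ⊆ P(E) is a flat of Cl(M) of rank r if and only if S = P(F) for some q-flat F of M with ρ(F) = r, where P(F) is the set of one-dimensional subspaces contained in F. -/
/-- The rank function `r_ρ(S) = ρ(⟨S⟩)` of the classical matroid `Cl(M)`. -/
def clRank {Fq : Type*} [Field Fq] {n : ℕ} (ρ : Submodule Fq (Fin n → Fq) → ℕ)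
    (S : Set (ProjLine Fq n)) : ℕ :=
  ρ (spanLines S)

/-- A flat of the classical matroid `Cl(M)`. -/
def IsClFlat {Fq : Type*} [Field Fq] {n : ℕ} (ρ : Submodule Fq (Fin n → Fq) → ℕ)
    (S : Set (ProjLine Fq n)) : Prop :=
  ∀ x ∉ S, clRank ρ S < clRank ρ (insert x S)

/-- A `q`-flat of the `q`-matroid `(F_q^n, ρ)`. -/
def IsQFlat {Fq : Type*} [Field Fq] {n : ℕ} (ρ : Submodule Fq (Fin n → Fq) → ℕ)
    (F : Submodule Fq (Fin n → Fq)) : Prop :=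
  ∀ e : Fin n → Fq, e ∉ F → ρ F < ρ (F ⊔ Submodule.span Fq {e})

lemma line_exists_gen {Fq : Type*} [Field Fq] {n : ℕ}
    (L : Submodule Fq (Fin n → Fq)) (hL : Module.finrank Fq ↥L = 1) :
    ∃ v : Fin n → Fq, v ≠ 0 ∧ L = Submodule.span Fq {v} := by
  have hbot : L ≠ ⊥ := by
    intro h; rw [h] at hL; simp [finrank_bot] at hL
  obtain ⟨v, hvL, hv0⟩ := Submodule.ne_bot_iff L |>.mp hbot
  refine ⟨v, hv0, ?_⟩
  have hle : Submodule.span Fq {v} ≤ L := Submodule.span_le.mpr (by simpa using hvL)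
  have := Submodule.eq_of_le_of_finrank_eq hle (by
    rw [finrank_span_singleton hv0, hL])
  exact this.symm

lemma spanLines_insert {Fq : Type*} [Field Fq] {n : ℕ}
    (x : ProjLine Fq n) (S : Set (ProjLine Fq n)) :
    spanLines (insert x S) = x.1 ⊔ spanLines S := by
  show (⨆ L ∈ insert x S, (L : ProjLine Fq n).1) = _
  rw [iSup_insert]; rfl

lemma le_spanLines {Fq : Type*} [Field Fq] {n : ℕ}
    {L : ProjLine Fq n} {S : Set (ProjLine Fq n)} (h : L ∈ S) :
    L.1 ≤ spanLines S := le_iSup₂_of_le L h le_rfl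

lemma spanLines_le {Fq : Type*} [Field Fq] {n : ℕ}
    {S : Set (ProjLine Fq n)} {F : Submodule Fq (Fin n → Fq)}
    (h : ∀ L ∈ S, (L : ProjLine Fq n).1 ≤ F) : spanLines S ≤ F :=
  iSup₂_le h

/-- `S ⊆ P(E)` is a flat of `Cl(M)` of rank `r` if and only if
`S = P(F)` for some `q`-flat `F` of `M` with `ρ(F) = r`. -/
theorem stmt_8 {Fq : Type*} [Field Fq] [Fintype Fq] {n : ℕ}
    (ρ : Submodule Fq (Fin n → Fq) → ℕ)
    (hP1 : ∀ X, ρ X ≤ Module.finrank Fq ↥X)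
    (hP2 : ∀ X Y, X ≤ Y → ρ X ≤ ρ Y)
    (hP3 : ∀ X Y, ρ (X ⊔ Y) + ρ (X ⊓ Y) ≤ ρ X + ρ Y)
    (S : Set (ProjLine Fq n)) (r : ℕ) :
    (IsClFlat ρ S ∧ clRank ρ S = r) ↔
      ∃ F : Submodule Fq (Fin n → Fq), IsQFlat ρ F ∧ ρ F = r ∧
        S = {L : ProjLine Fq n | L.1 ≤ F} := by
  constructor
  · rintro ⟨hflat, hrank⟩
    refine ⟨spanLines S, ?_, hrank, ?_⟩
    · intro e he
      have he0 : e ≠ 0 := fun h => he (h ▸ (spanLines S).zero_mem)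
      set x : ProjLine Fq n := ⟨Submodule.span Fq {e}, finrank_span_singleton he0⟩
      have hxS : x ∉ S := by
        intro hx
        exact he (le_spanLines hx (Submodule.mem_span_singleton_self e))
      have := hflat x hxS
      rw [clRank, clRank, spanLines_insert] at this
      simpa [sup_comm] using this
    · ext L
      constructor
      · exact fun h => le_spanLines h
      · intro h
        by_contra hLS
        have := hflat L hLS
        rw [clRank, clRank, spanLines_insert, sup_eq_right.mpr h] at this
        exact lt_irrefl _ this
  · rintro ⟨F, hqflat, hr, rfl⟩
    have hspan : spanLines {L : ProjLine Fq n | L.1 ≤ F} = F := by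
      apply le_antisymm (spanLines_le fun L hL => hL)
      intro v hv
      rcases eq_or_ne v 0 with rfl | hv0
      · exact (spanLines _).zero_mem
      · exact le_spanLines (L := ⟨Submodule.span Fq {v}, finrank_span_singleton hv0⟩)
          (Submodule.span_le.mpr (by simpa using hv))
          (Submodule.mem_span_singleton_self v)
    constructor
    · intro x hx
      obtain ⟨e, he0, hxe⟩ := line_exists_gen x.1 x.2
      have heF : e ∉ F := by
        intro heF
        exact hx (by
          show x.1 ≤ F
          rw [hxe]
          exact Submodule.span_le.mpr (by simpa using heF))
      have := hqflat e heF
      rw [clRank, clRank, spanLines_insert, hspan, hxe, sup_comm]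
      exact this
    · rw [clRank, hspan, hr]
end

section
/- For any q-matroid M on F_q^n, the lattice of q-flats of M is a geometric lattice: it is a finite lattice satisfying the Jordan–Dedekind chain property, it is atomistic, and its rank function is semimodular. -/
/-- In a finite poset with bottom and top, equipped with a strictly monotone rank `r`
with `r bot = 0`, `r top = N`, such that above any `a < b` there is a one-step
element, every maximal chain has `N + 1` elements. -/
theorem maxchain_ncard {α : Type*} [PartialOrder α] [Finite α] (r : α → ℕ) (N : ℕ)
    (hs : ∀ a b : α, a < b → r a < r b)
    (bot top : α) (hbot : ∀ a, bot ≤ a) (htop : ∀ a, a ≤ top)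
    (hrb : r bot = 0) (hrt : r top = N)
    (hstep : ∀ a b : α, a < b → ∃ c, a < c ∧ c ≤ b ∧ r c = r a + 1)
    (C : Set α) (hC : IsMaxChain (· ≤ ·) C) : C.ncard = N + 1 := by
  have hmono : ∀ a b : α, a ≤ b → r a ≤ r b := by
    intro a b hab
    rcases eq_or_lt_of_le hab with h | h
    · exact h ▸ le_rfl
    · exact (hs a b h).le
  have hchain := hC.1
  have hbotC : bot ∈ C := by
    have : C = insert bot C :=
      hC.2 (hchain.insert fun b _ _ => Or.inl (hbot b)) (Set.subset_insert _ _)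
    rw [this]; exact Set.mem_insert _ _
  have htopC : top ∈ C := by
    have : C = insert top C :=
      hC.2 (hchain.insert fun b _ _ => Or.inr (htop b)) (Set.subset_insert _ _)
    rw [this]; exact Set.mem_insert _ _
  have hinj : Set.InjOn r C := by
    intro x hx y hy hxy
    by_contra hne
    rcases hchain hx hy hne with h | h <;> rcases lt_or_eq_of_le h with h' | h'
    · exact absurd hxy (hs x y h').ne
    · exact hne h'
    · exact absurd hxy.symm (hs y x h').ne
    · exact hne h'.symm
  have hsurj : ∀ k, k ≤ N → ∃ x ∈ C, r x = k := by
    intro k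
    induction k with
    | zero => intro _; exact ⟨bot, hbotC, hrb⟩
    | succ k ih =>
      intro hk
      obtain ⟨x, hxC, hxr⟩ := ih (Nat.le_of_succ_le hk)
      have hxtop : x < top := by
        rcases lt_or_eq_of_le (htop x) with h | h
        · exact h
        · exfalso; rw [h, hrt] at hxr; omega
      set T : Set α := {d ∈ C | x < d} with hT
      have hTne : T.Nonempty := ⟨top, htopC, hxtop⟩
      obtain ⟨b, hbT, hbmin⟩ :=
        Set.Finite.exists_minimalFor id T (Set.toFinite T) hTne
      have hbleast : ∀ d ∈ T, b ≤ d := by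
        intro d hd
        rcases eq_or_ne d b with h | h
        · exact h.ge
        · rcases hchain hd.1 hbT.1 h with h' | h'
          · exact hbmin hd h'
          · exact h'
      obtain ⟨c, hxc, hcb, hcr⟩ := hstep x b hbT.2
      have hcC : c ∈ C := by
        have hins : IsChain (· ≤ ·) (insert c C) := by
          refine hchain.insert fun d hd hne => ?_
          rcases eq_or_ne d x with h | h
          · exact Or.inr (h.le.trans hxc.le)
          · rcases hchain hd hxC h with h' | h'
            · exact Or.inr (h'.trans hxc.le)
            · exact Or.inl (hcb.trans (hbleast d ⟨hd, lt_of_le_of_ne h' (Ne.symm h)⟩))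
        have : C = insert c C := hC.2 hins (Set.subset_insert _ _)
        rw [this]; exact Set.mem_insert _ _
      exact ⟨c, hcC, by rw [hcr, hxr]⟩
  have himg : r '' C = Set.Iic N := by
    apply Set.eq_of_subset_of_subset
    · rintro _ ⟨x, hx, rfl⟩
      exact hrt ▸ hmono x top (htop x)
    · intro k hk
      obtain ⟨x, hx, hxr⟩ := hsurj k hk
      exact ⟨x, hx, hxr⟩
  calc C.ncard = (r '' C).ncard := (Set.ncard_image_of_injOn hinj).symm
    _ = (Set.Iic N).ncard := by rw [himg]
    _ = N + 1 := by rw [← Finset.coe_Iic, Set.ncard_coe_finset, Nat.card_Iic]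

/-- the poset of `q`-flats of a `q`-matroid on `F_q^n`, ordered
by inclusion, is a geometric lattice: it is a finite lattice (binary meets and
joins exist), it satisfies the Jordan–Dedekind chain property, it is atomistic,
and its rank function (the common length of maximal chains in `[0, x]`) is
semimodular. -/
theorem stmt_10 {Fq : Type*} [Field Fq] [Fintype Fq] {n : ℕ}
    (ρ : Submodule Fq (Fin n → Fq) → ℕ)
    (hP1 : ∀ X, ρ X ≤ Module.finrank Fq ↥X)
    (hP2 : ∀ X Y, X ≤ Y → ρ X ≤ ρ Y)
    (hP3 : ∀ X Y, ρ (X ⊔ Y) + ρ (X ⊓ Y) ≤ ρ X + ρ Y) :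
    -- the collection of q-flats is finite
    Finite {F : Submodule Fq (Fin n → Fq) // IsQFlat ρ F} ∧
    -- it is a lattice: binary meets and joins exist
    (∀ a b : {F : Submodule Fq (Fin n → Fq) // IsQFlat ρ F},
      ∃ m, IsGLB {a, b} m) ∧
    (∀ a b : {F : Submodule Fq (Fin n → Fq) // IsQFlat ρ F},
      ∃ j, IsLUB {a, b} j) ∧
    -- Jordan–Dedekind: all maximal chains have the same length
    (∀ C₁ C₂ : Set {F : Submodule Fq (Fin n → Fq) // IsQFlat ρ F},
      IsMaxChain (· ≤ ·) C₁ → IsMaxChain (· ≤ ·) C₂ → C₁.ncard = C₂.ncard) ∧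
    -- atomistic: every element is the supremum of the atoms below it
    (∃ bot : {F : Submodule Fq (Fin n → Fq) // IsQFlat ρ F},
      IsLeast Set.univ bot ∧
      ∀ x : {F : Submodule Fq (Fin n → Fq) // IsQFlat ρ F},
        IsLUB {a | bot ⋖ a ∧ a ≤ x} x) ∧
    -- there is a rank function, given by lengths of maximal chains in `[0,x]`,
    -- and it is semimodular
    (∃ rk : {F : Submodule Fq (Fin n → Fq) // IsQFlat ρ F} → ℕ,
      (∀ x : {F : Submodule Fq (Fin n → Fq) // IsQFlat ρ F},
        ∀ C : Set (Set.Iic x), IsMaxChain (· ≤ ·) C → C.ncard = rk x + 1) ∧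
      (∀ a b m j : {F : Submodule Fq (Fin n → Fq) // IsQFlat ρ F},
        IsGLB {a, b} m → IsLUB {a, b} j → rk m + rk j ≤ rk a + rk b)) := by
  classical
  haveI hSMfin : Finite (Submodule Fq (Fin n → Fq)) :=
    Finite.of_injective (fun S : Submodule Fq (Fin n → Fq) => (S : Set (Fin n → Fq)))
      SetLike.coe_injective
  -- basic consequences of the axioms
  have rho_bot : ρ (⊥ : Submodule Fq (Fin n → Fq)) = 0 :=
    Nat.le_zero.mp (le_trans (hP1 ⊥) (by rw [finrank_bot]))
  have hspan1 : ∀ e : Fin n → Fq, ρ (Submodule.span Fq {e}) ≤ 1 := by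
    intro e
    refine le_trans (hP1 _) ?_
    by_cases he : e = 0
    · rw [he, Submodule.span_zero_singleton, finrank_bot]; omega
    · rw [finrank_span_singleton he]
  have unit : ∀ (X : Submodule Fq (Fin n → Fq)) (e : Fin n → Fq),
      ρ (X ⊔ Submodule.span Fq {e}) ≤ ρ X + 1 := by
    intro X e
    have h1 := hP3 X (Submodule.span Fq {e})
    have h2 := hspan1 e
    omega
  -- the closure operator
  have cl_ex : ∀ X : Submodule Fq (Fin n → Fq),
      ∃ Y, X ≤ Y ∧ ρ Y = ρ X ∧ ∀ Z, X ≤ Z → ρ Z = ρ X → Z ≤ Y := by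
    intro X
    set S : Set (Submodule Fq (Fin n → Fq)) := {Y | X ≤ Y ∧ ρ Y = ρ X} with hS
    obtain ⟨Y, hYS, hmax⟩ :=
      Set.Finite.exists_maximalFor id S (Set.toFinite S) ⟨X, le_rfl, rfl⟩
    refine ⟨Y, hYS.1, hYS.2, ?_⟩
    intro Z hXZ hZr
    have hmem : Y ⊔ Z ∈ S := by
      refine ⟨le_trans hYS.1 le_sup_left, ?_⟩
      refine le_antisymm ?_ (hP2 _ _ (le_trans hYS.1 le_sup_left))
      have h3 := hP3 Y Z
      have h4 : ρ X ≤ ρ (Y ⊓ Z) := hP2 _ _ (le_inf hYS.1 hXZ)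
      have h5 := hYS.2
      omega
    have heq : Y = Y ⊔ Z := le_antisymm le_sup_left (hmax hmem le_sup_left)
    exact le_sup_right.trans heq.ge
  choose cl cl_le cl_rho cl_max using cl_ex
  have cl_mono : ∀ X Y : Submodule Fq (Fin n → Fq), X ≤ Y → cl X ≤ cl Y := by
    intro X Y hXY
    have key : ρ (cl X ⊔ Y) = ρ Y := by
      refine le_antisymm ?_ (hP2 _ _ le_sup_right)
      have h3 := hP3 (cl X) Y
      have h4 : ρ X ≤ ρ (cl X ⊓ Y) := hP2 _ _ (le_inf (cl_le X) hXY)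
      have h5 := cl_rho X
      omega
    exact le_sup_left.trans (cl_max Y _ le_sup_right key)
  have cl_idem : ∀ X : Submodule Fq (Fin n → Fq), cl (cl X) = cl X := by
    intro X
    refine le_antisymm ?_ (cl_le _)
    refine cl_max X _ ((cl_le X).trans (cl_le (cl X))) ?_
    rw [cl_rho, cl_rho]
  have flat_iff : ∀ F : Submodule Fq (Fin n → Fq), IsQFlat ρ F ↔ cl F = F := by
    intro F
    constructor
    · intro hF
      by_contra hne
      have hlt : F < cl F := lt_of_le_of_ne (cl_le F) (Ne.symm hne)
      obtain ⟨e, heC, heF⟩ := SetLike.exists_of_lt hlt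
      have h1 := hF e heF
      have h2 : F ⊔ Submodule.span Fq {e} ≤ cl F :=
        sup_le (cl_le F) ((Submodule.span_singleton_le_iff_mem e _).mpr heC)
      have h3 := hP2 _ _ h2
      have h4 := cl_rho F
      omega
    · intro hF e he
      by_contra hn
      push_neg at hn
      have heq : ρ (F ⊔ Submodule.span Fq {e}) = ρ F :=
        le_antisymm hn (hP2 _ _ le_sup_left)
      have hle := cl_max F _ le_sup_left heq
      rw [hF] at hle
      exact he (hle (Submodule.mem_sup_right (Submodule.mem_span_singleton_self e)))
  have flat_cl : ∀ X : Submodule Fq (Fin n → Fq), IsQFlat ρ (cl X) :=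
    fun X => (flat_iff _).mpr (cl_idem X)
  have flat_top : IsQFlat ρ (⊤ : Submodule Fq (Fin n → Fq)) :=
    fun e he => absurd Submodule.mem_top he
  -- distinguished flats
  set botL : {F : Submodule Fq (Fin n → Fq) // IsQFlat ρ F} := ⟨cl ⊥, flat_cl ⊥⟩ with hbotL
  set topL : {F : Submodule Fq (Fin n → Fq) // IsQFlat ρ F} := ⟨⊤, flat_top⟩ with htopL
  have hbotle : ∀ x : {F : Submodule Fq (Fin n → Fq) // IsQFlat ρ F}, botL ≤ x := by
    intro x
    refine Subtype.coe_le_coe.mp ?_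
    calc (botL : Submodule Fq (Fin n → Fq)) = cl ⊥ := rfl
      _ ≤ cl x.val := cl_mono _ _ bot_le
      _ = x.val := (flat_iff _).mp x.2
  have htople : ∀ x : {F : Submodule Fq (Fin n → Fq) // IsQFlat ρ F}, x ≤ topL :=
    fun x => Subtype.coe_le_coe.mp le_top
  have rho_botL : ρ (botL : Submodule Fq (Fin n → Fq)) = 0 := by
    show ρ (cl ⊥) = 0
    rw [cl_rho]; exact rho_bot
  -- strict monotonicity on flats
  have smono : ∀ a b : {F : Submodule Fq (Fin n → Fq) // IsQFlat ρ F},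
      a < b → ρ a.val < ρ b.val := by
    intro a b hab
    have hlt : a.val < b.val := Subtype.coe_lt_coe.mpr hab
    obtain ⟨e, heb, hea⟩ := SetLike.exists_of_lt hlt
    have h1 := a.2 e hea
    have h2 : a.val ⊔ Submodule.span Fq {e} ≤ b.val :=
      sup_le hlt.le ((Submodule.span_singleton_le_iff_mem e _).mpr heb)
    exact lt_of_lt_of_le h1 (hP2 _ _ h2)
  -- the one-step property
  have step : ∀ a b : {F : Submodule Fq (Fin n → Fq) // IsQFlat ρ F}, a < b →
      ∃ c : {F : Submodule Fq (Fin n → Fq) // IsQFlat ρ F},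
        a < c ∧ c ≤ b ∧ ρ c.val = ρ a.val + 1 := by
    intro a b hab
    have hlt : a.val < b.val := Subtype.coe_lt_coe.mpr hab
    obtain ⟨e, heb, hea⟩ := SetLike.exists_of_lt hlt
    have hrsup : ρ (a.val ⊔ Submodule.span Fq {e}) = ρ a.val + 1 :=
      le_antisymm (unit _ _) (a.2 e hea)
    refine ⟨⟨cl (a.val ⊔ Submodule.span Fq {e}), flat_cl _⟩, ?_, ?_, ?_⟩
    · refine Subtype.coe_lt_coe.mp ?_
      have h1 : a.val ≤ cl (a.val ⊔ Submodule.span Fq {e}) := le_sup_left.trans (cl_le _)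
      have he' : e ∈ cl (a.val ⊔ Submodule.span Fq {e}) :=
        (cl_le _) (Submodule.mem_sup_right (Submodule.mem_span_singleton_self e))
      exact lt_of_le_of_ne h1 (fun h => hea (by rw [h]; exact he'))
    · refine Subtype.coe_le_coe.mp ?_
      calc cl (a.val ⊔ Submodule.span Fq {e})
          ≤ cl b.val := cl_mono _ _
            (sup_le hlt.le ((Submodule.span_singleton_le_iff_mem e _).mpr heb))
        _ = b.val := (flat_iff _).mp b.2
    · rw [cl_rho]; exact hrsup
  -- covers from rank jumps of one
  have cov_of : ∀ a b : {F : Submodule Fq (Fin n → Fq) // IsQFlat ρ F},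
      a < b → ρ b.val = ρ a.val + 1 → a ⋖ b := by
    intro a b hab hr
    refine ⟨hab, fun c hac hcb => ?_⟩
    have h1 := smono a c hac
    have h2 := smono c b hcb
    omega
  -- meets and joins
  have flat_inf : ∀ a b : {F : Submodule Fq (Fin n → Fq) // IsQFlat ρ F},
      IsQFlat ρ (a.val ⊓ b.val) := by
    intro a b
    rw [flat_iff]
    refine le_antisymm (le_inf ?_ ?_) (cl_le _)
    · exact (cl_mono _ _ inf_le_left).trans ((flat_iff _).mp a.2).le
    · exact (cl_mono _ _ inf_le_right).trans ((flat_iff _).mp b.2).le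
  have hglb : ∀ a b : {F : Submodule Fq (Fin n → Fq) // IsQFlat ρ F},
      IsGLB {a, b} (⟨a.val ⊓ b.val, flat_inf a b⟩ :
        {F : Submodule Fq (Fin n → Fq) // IsQFlat ρ F}) := by
    intro a b
    constructor
    · intro y hy
      simp only [Set.mem_insert_iff, Set.mem_singleton_iff] at hy
      rcases hy with rfl | rfl
      · exact Subtype.coe_le_coe.mp inf_le_left
      · exact Subtype.coe_le_coe.mp inf_le_right
    · intro y hy
      have h1 : y ≤ a := hy (Set.mem_insert a {b})
      have h2 : y ≤ b := hy (Set.mem_insert_of_mem a rfl)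
      exact Subtype.coe_le_coe.mp
        (le_inf (Subtype.coe_le_coe.mpr h1) (Subtype.coe_le_coe.mpr h2))
  have hlub : ∀ a b : {F : Submodule Fq (Fin n → Fq) // IsQFlat ρ F},
      IsLUB {a, b} (⟨cl (a.val ⊔ b.val), flat_cl _⟩ :
        {F : Submodule Fq (Fin n → Fq) // IsQFlat ρ F}) := by
    intro a b
    constructor
    · intro y hy
      simp only [Set.mem_insert_iff, Set.mem_singleton_iff] at hy
      rcases hy with rfl | rfl
      · exact Subtype.coe_le_coe.mp (le_sup_left.trans (cl_le _))
      · exact Subtype.coe_le_coe.mp (le_sup_right.trans (cl_le _))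
    · intro y hy
      have h1 : a ≤ y := hy (Set.mem_insert a {b})
      have h2 : b ≤ y := hy (Set.mem_insert_of_mem a rfl)
      refine Subtype.coe_le_coe.mp ?_
      calc cl (a.val ⊔ b.val)
          ≤ cl y.val := cl_mono _ _
            (sup_le (Subtype.coe_le_coe.mpr h1) (Subtype.coe_le_coe.mpr h2))
        _ = y.val := (flat_iff _).mp y.2
  refine ⟨inferInstance, fun a b => ⟨_, hglb a b⟩, fun a b => ⟨_, hlub a b⟩, ?_, ?_, ?_⟩
  · -- Jordan–Dedekind
    intro C₁ C₂ h₁ h₂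
    rw [maxchain_ncard (fun x => ρ x.val) (ρ (⊤ : Submodule Fq (Fin n → Fq)))
        smono botL topL hbotle htople rho_botL rfl step C₁ h₁,
      maxchain_ncard (fun x => ρ x.val) (ρ (⊤ : Submodule Fq (Fin n → Fq)))
        smono botL topL hbotle htople rho_botL rfl step C₂ h₂]
  · -- atomistic
    refine ⟨botL, ⟨Set.mem_univ _, fun y _ => hbotle y⟩, ?_⟩
    intro x
    constructor
    · rintro a ⟨_, hax⟩; exact hax
    · intro y hy
      refine Subtype.coe_le_coe.mp ?_
      intro e he
      by_cases heb : e ∈ (botL : Submodule Fq (Fin n → Fq))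
      · exact (Subtype.coe_le_coe.mpr (hbotle y)) heb
      · set A : {F : Submodule Fq (Fin n → Fq) // IsQFlat ρ F} :=
          ⟨cl ((botL : Submodule Fq (Fin n → Fq)) ⊔ Submodule.span Fq {e}), flat_cl _⟩ with hA
        have hr1 : ρ ((botL : Submodule Fq (Fin n → Fq)) ⊔ Submodule.span Fq {e}) = 1 := by
          have h1 := unit (botL : Submodule Fq (Fin n → Fq)) e
          have h2 := botL.2 e heb
          omega
        have hrA : ρ A.val = 1 := by
          show ρ (cl _) = 1
          rw [cl_rho]; exact hr1
        have hbA : botL < A := by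
          refine lt_of_le_of_ne (hbotle A) ?_
          intro h
          rw [← h] at hrA
          rw [rho_botL] at hrA
          exact absurd hrA (by norm_num)
        have hcov : botL ⋖ A := cov_of _ _ hbA (by rw [hrA, rho_botL])
        have hAx : A ≤ x := by
          refine Subtype.coe_le_coe.mp ?_
          have hsup : (botL : Submodule Fq (Fin n → Fq)) ⊔ Submodule.span Fq {e} ≤ x.val :=
            sup_le (Subtype.coe_le_coe.mpr (hbotle x))
              ((Submodule.span_singleton_le_iff_mem e _).mpr he)
          have h1 : A.val ≤ cl x.val := cl_mono _ _ hsup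
          rw [(flat_iff _).mp x.2] at h1
          exact h1
        have hAy : A ≤ y := hy ⟨hcov, hAx⟩
        exact (Subtype.coe_le_coe.mpr hAy)
          ((cl_le _) (Submodule.mem_sup_right (Submodule.mem_span_singleton_self e)))
  · -- rank function
    refine ⟨fun x => ρ x.val, ?_, ?_⟩
    · intro x C hC
      refine maxchain_ncard (fun y => ρ y.val.val) (ρ x.val) ?_
        ⟨botL, Set.mem_Iic.mpr (hbotle x)⟩ ⟨x, Set.mem_Iic.mpr le_rfl⟩ ?_ ?_ rho_botL rfl ?_ C hC
      · intro u v huv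
        exact smono u.val v.val (Subtype.coe_lt_coe.mpr huv)
      · intro u
        exact Subtype.coe_le_coe.mp (hbotle u.val)
      · intro u
        exact Subtype.coe_le_coe.mp u.2
      · intro u v huv
        obtain ⟨c, h1, h2, h3⟩ := step u.val v.val (Subtype.coe_lt_coe.mpr huv)
        exact ⟨⟨c, h2.trans v.2⟩, Subtype.coe_lt_coe.mp h1, Subtype.coe_le_coe.mp h2, h3⟩
    · intro a b m j hm hj
      have e1 : m = ⟨a.val ⊓ b.val, flat_inf a b⟩ := hm.unique (hglb a b)
      have e2 : j = ⟨cl (a.val ⊔ b.val), flat_cl _⟩ := hj.unique (hlub a b)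
      rw [e1, e2]
      show ρ (a.val ⊓ b.val) + ρ (cl (a.val ⊔ b.val)) ≤ ρ a.val + ρ b.val
      rw [cl_rho]
      have := hP3 a.val b.val
      omega
end

section
/- Let L be the lattice of cycles (ordered by inclusion) of the dual Cl(M)* of the classical matroid associated to the uniform q-matroid U(k,n) on F_q^n. The number of cycles of nullity i (1 ≤ i ≤ k) equals the Gaussian binomial coefficient [n choose n−k+i]_q, and each such cycle has cardinality q^{n−1} + q^{n−2} + ... + q^{k−i}. -/
/-- The rank function of the dual matroid `Cl(M)*`:
`r*(S) = |S| + r_ρ(Sᶜ) - r_ρ(P(E))`. -/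
noncomputable def clDualRank {Fq : Type*} [Field Fq] {n : ℕ} (ρ : Submodule Fq (Fin n → Fq) → ℕ)
    (S : Set (ProjLine Fq n)) : ℕ :=
  S.ncard + clRank ρ Sᶜ - clRank ρ Set.univ

/-- The nullity function of `Cl(M)*`. -/
noncomputable def clDualNullity {Fq : Type*} [Field Fq] {n : ℕ} (ρ : Submodule Fq (Fin n → Fq) → ℕ)
    (S : Set (ProjLine Fq n)) : ℕ :=
  S.ncard - clDualRank ρ S

/-- A cycle of `Cl(M)*`: a set minimal (w.r.t. inclusion) among all subsets of
`P(E)` with the same nullity. -/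
def IsClDualCycle {Fq : Type*} [Field Fq] {n : ℕ} (ρ : Submodule Fq (Fin n → Fq) → ℕ)
    (S : Set (ProjLine Fq n)) : Prop :=
  ∀ T ⊆ S, clDualNullity ρ T = clDualNullity ρ S → T = S

/-- The Gaussian binomial coefficient `[n choose k]_q`, defined via the
`q`-Pascal recurrence `[n+1, k+1]_q = [n, k]_q + q^{k+1} [n, k+1]_q`. -/
def gaussBinom (q : ℕ) : ℕ → ℕ → ℕ
  | 0, 0 => 1
  | 0, _ + 1 => 0
  | _ + 1, 0 => 1
  | n + 1, k + 1 => gaussBinom q n k + q ^ (k + 1) * gaussBinom q n (k + 1)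

/-! ### Auxiliary integer product identities -/

open Finset Module Submodule Set

namespace Stmt18Aux

/-- `Pz q n d = ∏_{i<d} (q^n - q^i)` in ℤ. -/
def Pz (q : ℕ) (n d : ℕ) : ℤ := ∏ i ∈ range d, ((q : ℤ) ^ n - (q : ℤ) ^ i)

/-- `Qz q m = ∏_{j=1}^m (q^j - 1)` in ℤ. -/
def Qz (q : ℕ) (m : ℕ) : ℤ := ∏ j ∈ range m, ((q : ℤ) ^ (j + 1) - 1)

/-- `Rz q d = ∏_{i<d} q^i` in ℤ. -/
def Rz (q : ℕ) (d : ℕ) : ℤ := ∏ i ∈ range d, (q : ℤ) ^ i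

lemma Qz_pos {q : ℕ} (hq : 2 ≤ q) (m : ℕ) : 0 < Qz q m := by
  apply Finset.prod_pos
  intro j _
  have hq1 : (1:ℤ) < (q:ℤ) := by exact_mod_cast hq.trans_lt' one_lt_two
  have h1 : (1:ℤ) < (q:ℤ) ^ (j+1) := one_lt_pow₀ hq1 (Nat.succ_ne_zero j)
  linarith

lemma Pz_dd_pos {q : ℕ} (hq : 2 ≤ q) (d : ℕ) : 0 < Pz q d d := by
  apply Finset.prod_pos
  intro i hi
  have hiq : (q:ℤ) ^ i < (q:ℤ) ^ d :=
    pow_lt_pow_right₀ (by exact_mod_cast hq.trans_lt' one_lt_two) (mem_range.mp hi)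
  linarith

lemma Pz_shift (q : ℕ) (m d : ℕ) :
    ∏ i ∈ range d, ((q:ℤ) ^ (m+1) - (q:ℤ) ^ (i+1)) = (q:ℤ) ^ d * Pz q m d := by
  have : ∀ i ∈ range d, ((q:ℤ) ^ (m+1) - (q:ℤ) ^ (i+1)) = (q:ℤ) * ((q:ℤ)^m - (q:ℤ)^i) := by
    intro i _; ring
  rw [Finset.prod_congr rfl this, Finset.prod_mul_distrib, Finset.prod_const, card_range, Pz]

lemma Pz_succ_succ (q : ℕ) (n d : ℕ) :
    Pz q (n+1) (d+1) = ((q:ℤ) ^ (n+1) - 1) * ((q:ℤ) ^ d * Pz q n d) := by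
  rw [Pz, Finset.prod_range_succ', ← Pz_shift q n d, pow_zero, mul_comm]

lemma Pz_dsucc (q : ℕ) (n d : ℕ) :
    Pz q n (d+1) = Pz q n d * ((q:ℤ) ^ n - (q:ℤ) ^ d) := by
  rw [Pz, Finset.prod_range_succ, Pz]

lemma gauss_mul {q : ℕ} (hq : 2 ≤ q) : ∀ n d, (gaussBinom q n d : ℤ) * Pz q d d = Pz q n d := by
  intro n
  induction n with
  | zero =>
    intro d
    match d with
    | 0 => simp [gaussBinom, Pz]
    | d + 1 =>
      have h0 : Pz q 0 (d+1) = 0 := by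
        apply Finset.prod_eq_zero (Finset.mem_range.mpr (Nat.succ_pos d))
        simp
      simp [gaussBinom, h0]
  | succ n ih =>
    intro d
    match d with
    | 0 => simp [gaussBinom, Pz]
    | d + 1 =>
      have hPdd : Pz q d d ≠ 0 := (Pz_dd_pos hq d).ne'
      apply mul_right_cancel₀ hPdd
      have IH1 := ih d
      have IH2 := ih (d+1)
      have e1 := Pz_succ_succ q d d
      have e2 := Pz_succ_succ q n d
      have e3 := Pz_dsucc q n d
      show (gaussBinom q (n+1) (d+1) : ℤ) * Pz q (d+1) (d+1) * Pz q d d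
          = Pz q (n+1) (d+1) * Pz q d d
      have hG : (gaussBinom q (n+1) (d+1) : ℤ)
          = (gaussBinom q n d : ℤ) + (q:ℤ)^(d+1) * gaussBinom q n (d+1) := by
        simp [gaussBinom]
      rw [hG, e1, e2]
      rw [e1] at IH2
      rw [e3] at IH2
      linear_combination (((q:ℤ)^(d+1) - 1) * ((q:ℤ)^d * Pz q d d)) * IH1
        + ((q:ℤ)^(d+1) * Pz q d d) * IH2

lemma pz_qz {q : ℕ} (hq : 2 ≤ q) {n : ℕ} :
    ∀ d, d ≤ n → Pz q n d * Qz q (n - d) = Rz q d * Qz q n := by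
  intro d
  induction d with
  | zero => intro _; simp [Pz, Rz]
  | succ d ih =>
    intro hd
    have hdn : d ≤ n := Nat.le_of_succ_le hd
    have IH := ih hdn
    have hcancel : ((q:ℤ) ^ (n - d) - 1) ≠ 0 := by
      have hq1 : (1:ℤ) < (q:ℤ) := by exact_mod_cast hq.trans_lt' one_lt_two
      have h1 : (1:ℤ) < (q:ℤ) ^ (n-d) := one_lt_pow₀ hq1 (by omega)
      linarith
    apply mul_right_cancel₀ hcancel
    have eQ : Qz q (n - d) = Qz q (n - (d+1)) * ((q:ℤ) ^ (n - d) - 1) := by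
      have h1 : n - d = (n - (d+1)) + 1 := by omega
      rw [h1, Qz, Finset.prod_range_succ, ← Qz]
    have eP : Pz q n (d+1) = Pz q n d * ((q:ℤ) ^ n - (q:ℤ) ^ d) := by
      rw [Pz, Finset.prod_range_succ, Pz]
    have eR : Rz q (d+1) = Rz q d * (q:ℤ) ^ d := by
      rw [Rz, Finset.prod_range_succ, Rz]
    have epow : (q:ℤ) ^ n - (q:ℤ) ^ d = (q:ℤ)^d * ((q:ℤ)^(n-d) - 1) := by
      rw [mul_sub, mul_one, ← pow_add]
      congr 2
      omega
    calc Pz q n (d+1) * Qz q (n - (d+1)) * ((q:ℤ) ^ (n - d) - 1)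
        = Pz q n d * Qz q (n - d) * ((q:ℤ) ^ n - (q:ℤ) ^ d) := by rw [eP, eQ]; ring
      _ = Rz q d * Qz q n * ((q:ℤ)^d * ((q:ℤ)^(n-d) - 1)) := by rw [IH, epow]
      _ = Rz q (d+1) * Qz q n * ((q:ℤ) ^ (n - d) - 1) := by rw [eR]; ring

lemma pz_symm {q : ℕ} (hq : 2 ≤ q) {n d : ℕ} (hd : d ≤ n) :
    Pz q n d * Pz q (n - d) (n - d) = Pz q n (n - d) * Pz q d d := by
  have h1 := pz_qz hq d hd
  have h2 := pz_qz hq (n - d) (Nat.sub_le n d)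
  rw [show n - (n - d) = d by omega] at h2
  have h3 := pz_qz (n := d) hq d le_rfl
  have h4 := pz_qz (n := n - d) hq (n - d) le_rfl
  have hQ0 : Qz q 0 = 1 := by simp [Qz]
  rw [Nat.sub_self, hQ0, mul_one] at h3 h4
  have hc : Qz q (n - d) * Qz q d ≠ 0 :=
    mul_ne_zero (Qz_pos hq _).ne' (Qz_pos hq _).ne'
  apply mul_right_cancel₀ hc
  calc Pz q n d * Pz q (n-d) (n-d) * (Qz q (n-d) * Qz q d)
      = (Pz q n d * Qz q (n-d)) * Pz q (n-d) (n-d) * Qz q d := by ring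
    _ = (Rz q d * Qz q n) * (Rz q (n-d) * Qz q (n-d)) * Qz q d := by rw [h1, h4]
    _ = (Rz q (n-d) * Qz q n) * (Rz q d * Qz q d) * Qz q (n-d) := by ring
    _ = (Pz q n (n-d) * Qz q d) * Pz q d d * Qz q (n-d) := by rw [h2, h3]
    _ = Pz q n (n-d) * Pz q d d * (Qz q (n-d) * Qz q d) := by ring

lemma geom_nat {q : ℕ} (hq : 1 ≤ q) : ∀ m, (∑ j ∈ range m, q ^ j) * (q - 1) + 1 = q ^ m := by
  intro m
  induction m with
  | zero => simp
  | succ m ih =>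
    rw [Finset.sum_range_succ, add_mul, add_right_comm, ih]
    have h1 : q ^ m * (q - 1) = q ^ (m+1) - q ^ m := by
      rw [Nat.mul_sub, mul_one, pow_succ]
    have h2 : q ^ m ≤ q ^ (m+1) := Nat.pow_le_pow_right hq (by omega)
    omega

/-! ### Counting subspaces of a finite vector space -/

section Grass

variable {K V : Type*} [Field K] [Fintype K] [AddCommGroup V] [Module K V] [Finite V]

instance : Finite (Submodule K V) :=
  Finite.of_injective (fun p => (p : Set V)) SetLike.coe_injective

/-- Fiber equivalence for the span map: tuples spanning a fixed `d`-dimensional subspace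
correspond to linearly independent tuples inside it. -/
noncomputable def grassFiberEquiv (d : ℕ) (W : {W : Submodule K V // finrank K ↥W = d}) :
    {s : {s : Fin d → V // LinearIndependent K s} //
        span K (Set.range s.1) = W.1} ≃ {g : Fin d → ↥W.1 // LinearIndependent K g} where
  toFun s := ⟨fun i => ⟨s.1.1 i, s.2.le (subset_span (Set.mem_range_self i))⟩, by
    apply LinearIndependent.of_comp (W.1.subtype)
    exact s.1.2⟩
  invFun g := ⟨⟨fun i => (g.1 i : V), g.2.map' W.1.subtype (Submodule.ker_subtype W.1)⟩, by
    have hfd : FiniteDimensional K ↥W.1 := Module.Finite.of_finite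
    have hsp : span K (Set.range g.1) = ⊤ :=
      g.2.span_eq_top_of_card_eq_finrank' (by simp [W.2])
    have : Set.range (fun i => (g.1 i : V)) = W.1.subtype '' Set.range g.1 := by
      ext x; simp [Set.range_comp]
    rw [this, ← Submodule.map_span, hsp, Submodule.map_top, Submodule.range_subtype]⟩
  left_inv s := by
    apply Subtype.ext; apply Subtype.ext; rfl
  right_inv g := by
    apply Subtype.ext; funext i; apply Subtype.ext; rfl

lemma grass_card (d : ℕ) (hd : d ≤ finrank K V) :
    Nat.card {W : Submodule K V // finrank K ↥W = d} *
      ∏ i ∈ range d, (Fintype.card K ^ d - Fintype.card K ^ i) =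
    ∏ i ∈ range d, (Fintype.card K ^ finrank K V - Fintype.card K ^ i) := by
  classical
  have hli := card_linearIndependent (K := K) (V := V) hd
  have e : {s : Fin d → V // LinearIndependent K s} ≃
      Σ W : {W : Submodule K V // finrank K ↥W = d},
        {g : Fin d → ↥W.1 // LinearIndependent K g} := by
    refine (Equiv.sigmaFiberEquiv
      (fun s : {s : Fin d → V // LinearIndependent K s} =>
        (⟨span K (Set.range s.1), by
          rw [finrank_span_eq_card s.2, Fintype.card_fin]⟩ :
          {W : Submodule K V // finrank K ↥W = d}))).symm.trans ?_
    refine Equiv.sigmaCongrRight fun W => ?_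
    refine (Equiv.subtypeEquivRight fun s => ?_).trans (grassFiberEquiv d W)
    constructor
    · intro h; exact congrArg Subtype.val h
    · intro h; exact Subtype.ext h
  rw [Nat.card_congr e] at hli
  letI : Fintype {W : Submodule K V // finrank K ↥W = d} := Fintype.ofFinite _
  letI : ∀ W : {W : Submodule K V // finrank K ↥W = d},
      Fintype {g : Fin d → ↥W.1 // LinearIndependent K g} := fun W => Fintype.ofFinite _
  rw [Nat.card_eq_fintype_card, Fintype.card_sigma] at hli
  have hfib : ∀ W : {W : Submodule K V // finrank K ↥W = d},
      Fintype.card {g : Fin d → ↥W.1 // LinearIndependent K g} =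
        ∏ i ∈ range d, (Fintype.card K ^ d - Fintype.card K ^ i) := by
    intro W
    haveI : Finite ↥W.1 := Subtype.finite
    have := card_linearIndependent (K := K) (V := ↥W.1) (k := d) (le_of_eq W.2.symm)
    rw [Nat.card_eq_fintype_card] at this
    rw [this, W.2]
    exact Fin.prod_univ_eq_prod_range (fun j => Fintype.card K ^ d - Fintype.card K ^ j) d
  rw [Finset.sum_congr rfl (fun W _ => hfib W), Finset.sum_const, Finset.card_univ,
    smul_eq_mul] at hli
  rw [Nat.card_eq_fintype_card, hli]
  exact Fin.prod_univ_eq_prod_range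
    (fun j => Fintype.card K ^ finrank K V - Fintype.card K ^ j) d

omit [Fintype K] in
lemma grass_card_zero (d : ℕ) (hd : finrank K V < d) :
    Nat.card {W : Submodule K V // finrank K ↥W = d} = 0 := by
  have : IsEmpty {W : Submodule K V // finrank K ↥W = d} := by
    constructor
    rintro ⟨W, hW⟩
    have hfd : FiniteDimensional K V := Module.Finite.of_finite
    have := Submodule.finrank_le W
    omega
  simp [Nat.card_of_isEmpty]

lemma card_dim_one :
    Nat.card {U : Submodule K V // Module.finrank K ↥U = 1} =
      ∑ j ∈ range (Module.finrank K V), Fintype.card K ^ j := by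
  have hq2 : 2 ≤ Fintype.card K := Fintype.one_lt_card
  rcases Nat.eq_zero_or_pos (Module.finrank K V) with h0 | hpos
  · rw [h0, Finset.range_zero, Finset.sum_empty]
    exact grass_card_zero 1 (by omega)
  · have h := grass_card (K := K) (V := V) 1 hpos
    rw [Finset.prod_range_one, Finset.prod_range_one, pow_zero, pow_one] at h
    have hg := geom_nat (by omega : 1 ≤ Fintype.card K) (Module.finrank K V)
    have h1 : 1 ≤ Fintype.card K ^ Module.finrank K V := Nat.one_le_pow _ _ (by omega)
    apply Nat.eq_of_mul_eq_mul_right (show 0 < Fintype.card K - 1 by omega)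
    omega

end Grass

section Lines

variable {K M : Type*} [Field K] [Fintype K] [AddCommGroup M] [Module K M] [Finite M]

/-- Lines of the ambient space inside `W` correspond to lines of `W`. -/
noncomputable def linesEquiv (W : Submodule K M) :
    {U : Submodule K ↥W // Module.finrank K ↥U = 1} ≃
      {p : Submodule K M // Module.finrank K ↥p = 1 ∧ p ≤ W} where
  toFun U := ⟨Submodule.map W.subtype U.1, by
    rw [Submodule.finrank_map_subtype_eq]; exact U.2, Submodule.map_subtype_le _ _⟩
  invFun p := ⟨Submodule.comap W.subtype p.1, by
    rw [(Submodule.comapSubtypeEquivOfLe p.2.2).finrank_eq]; exact p.2.1⟩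
  left_inv U := by
    apply Subtype.ext
    dsimp only
    rw [Submodule.comap_map_eq, Submodule.ker_subtype, sup_bot_eq]
  right_inv p := by
    apply Subtype.ext
    dsimp only
    rw [Submodule.map_comap_subtype, inf_eq_right.mpr p.2.2]

lemma card_lines_le (W : Submodule K M) :
    Nat.card {p : Submodule K M // Module.finrank K ↥p = 1 ∧ p ≤ W} =
      ∑ j ∈ range (Module.finrank K ↥W), Fintype.card K ^ j := by
  haveI : Finite ↥W := Subtype.finite
  rw [← Nat.card_congr (linesEquiv W), card_dim_one]

end Lines

/-! ### The matroid part -/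

section Matroid

variable {Fq : Type*} [Field Fq] [Fintype Fq] {n k : ℕ}

instance : Finite (ProjLine Fq n) := by
  unfold ProjLine; exact Subtype.finite

lemma spanLines_le_iff {S : Set (ProjLine Fq n)} {W : Submodule Fq (Fin n → Fq)} :
    spanLines S ≤ W ↔ ∀ L ∈ S, (L : ProjLine Fq n).1 ≤ W := by
  rw [spanLines, iSup₂_le_iff]

lemma le_spanLines {S : Set (ProjLine Fq n)} {L : ProjLine Fq n} (h : L ∈ S) :
    L.1 ≤ spanLines S :=
  le_iSup₂ (f := fun (L : ProjLine Fq n) (_ : L ∈ S) => L.1) L h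

lemma spanLines_mono {S T : Set (ProjLine Fq n)} (h : S ⊆ T) : spanLines S ≤ spanLines T :=
  spanLines_le_iff.2 fun L hL => le_spanLines (h hL)

lemma finrank_spanLines_le (S : Set (ProjLine Fq n)) :
    Module.finrank Fq ↥(spanLines S) ≤ S.ncard := by
  have hfin : S.Finite := Set.toFinite S
  refine Set.Finite.induction_on
    (motive := fun s _ => Module.finrank Fq ↥(spanLines s) ≤ s.ncard) S hfin ?_ ?_
  · rw [spanLines, _root_.iSup_emptyset]; simp
  · intro a s ha hs ih
    have hins : spanLines (insert a s) = a.1 ⊔ spanLines s := by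
      rw [spanLines, _root_.iSup_insert, spanLines]
    rw [hins, Set.ncard_insert_of_notMem ha hs]
    calc Module.finrank Fq ↥(a.1 ⊔ spanLines s)
        ≤ Module.finrank Fq ↥a.1 + Module.finrank Fq ↥(spanLines s) :=
          Submodule.finrank_add_le_finrank_add_finrank _ _
      _ ≤ 1 + s.ncard := by rw [a.2]; omega
      _ = s.ncard + 1 := by omega

lemma spanLines_setOf_le (W : Submodule Fq (Fin n → Fq)) :
    spanLines {L : ProjLine Fq n | L.1 ≤ W} = W := by
  apply le_antisymm
  · exact spanLines_le_iff.2 fun L hL => hL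
  · intro w hw
    by_cases hw0 : w = 0
    · rw [hw0]; exact Submodule.zero_mem _
    · have h1 : Module.finrank Fq ↥(Submodule.span Fq {w}) = 1 := finrank_span_singleton hw0
      have hLmem : (⟨Submodule.span Fq {w}, h1⟩ : ProjLine Fq n)
          ∈ {L : ProjLine Fq n | L.1 ≤ W} :=
        Set.mem_setOf.mpr ((Submodule.span_singleton_le_iff_mem w W).2 hw)
      exact le_spanLines hLmem (Submodule.mem_span_singleton_self w)

lemma spanLines_univ : spanLines (Set.univ : Set (ProjLine Fq n)) = ⊤ := by
  have : {L : ProjLine Fq n | L.1 ≤ ⊤} = Set.univ :=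
    Set.eq_univ_of_forall fun L => Set.mem_setOf.mpr le_top
  rw [← this, spanLines_setOf_le]

lemma spanLines_sup_compl (S : Set (ProjLine Fq n)) :
    spanLines S ⊔ spanLines Sᶜ = ⊤ := by
  have : spanLines S ⊔ spanLines Sᶜ = spanLines (S ∪ Sᶜ) :=
    (_root_.iSup_union (f := fun L : ProjLine Fq n => L.1) (s := S) (t := Sᶜ)).symm
  rw [this, Set.union_compl_self, spanLines_univ]

lemma finrank_fun_eq : Module.finrank Fq (Fin n → Fq) = n := by
  rw [Module.finrank_pi, Fintype.card_fin]

lemma nullity_eq (hk : k ≤ n) (ρ : Submodule Fq (Fin n → Fq) → ℕ)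
    (hρ : ∀ X : Submodule Fq (Fin n → Fq), ρ X = min (Module.finrank Fq ↥X) k)
    (S : Set (ProjLine Fq n)) :
    clDualNullity ρ S = k - min (Module.finrank Fq ↥(spanLines Sᶜ)) k := by
  have hrk : Module.finrank Fq (Fin n → Fq) = n := finrank_fun_eq
  have huniv : clRank ρ (Set.univ : Set (ProjLine Fq n)) = k := by
    rw [clRank, hρ, spanLines_univ, finrank_top, hrk, min_eq_right hk]
  have hineq : k ≤ S.ncard + min (Module.finrank Fq ↥(spanLines Sᶜ)) k := by
    rcases le_or_gt k (Module.finrank Fq ↥(spanLines Sᶜ)) with h | h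
    · omega
    · have h2 : Module.finrank Fq (⊤ : Submodule Fq (Fin n → Fq)) ≤
          Module.finrank Fq ↥(spanLines S) + Module.finrank Fq ↥(spanLines Sᶜ) := by
        rw [← spanLines_sup_compl S]
        exact Submodule.finrank_add_le_finrank_add_finrank _ _
      have h3 := finrank_spanLines_le S
      rw [finrank_top, hrk] at h2
      omega
  rw [clDualNullity, clDualRank, huniv, clRank, hρ]
  omega

lemma cycle_of_W (hk : k ≤ n) (ρ : Submodule Fq (Fin n → Fq) → ℕ)
    (hρ : ∀ X : Submodule Fq (Fin n → Fq), ρ X = min (Module.finrank Fq ↥X) k)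
    {i : ℕ} (hi1 : 1 ≤ i) (hik : i ≤ k) (W : Submodule Fq (Fin n → Fq))
    (hW : Module.finrank Fq ↥W = k - i) :
    IsClDualCycle ρ ({L : ProjLine Fq n | L.1 ≤ W}ᶜ) ∧
      clDualNullity ρ ({L : ProjLine Fq n | L.1 ≤ W}ᶜ) = i := by
  have hnul : clDualNullity ρ ({L : ProjLine Fq n | L.1 ≤ W}ᶜ) = i := by
    rw [nullity_eq hk ρ hρ, compl_compl, spanLines_setOf_le, hW]
    omega
  refine ⟨?_, hnul⟩
  intro T hT hTnul
  rw [hnul, nullity_eq hk ρ hρ] at hTnul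
  have hf : Module.finrank Fq ↥(spanLines Tᶜ) = k - i := by
    have := min_le_right (Module.finrank Fq ↥(spanLines Tᶜ)) k
    omega
  have hcompl : ({L : ProjLine Fq n | L.1 ≤ W}ᶜ)ᶜ ⊆ Tᶜ := Set.compl_subset_compl.mpr hT
  rw [compl_compl] at hcompl
  have hle : W ≤ spanLines Tᶜ := by
    calc W = spanLines {L : ProjLine Fq n | L.1 ≤ W} := (spanLines_setOf_le W).symm
      _ ≤ spanLines Tᶜ := spanLines_mono hcompl
  have hWeq : W = spanLines Tᶜ :=
    Submodule.eq_of_le_of_finrank_le hle (by omega)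
  have hsub : Tᶜ ⊆ {L : ProjLine Fq n | L.1 ≤ W} := fun L hL => by
    simp only [Set.mem_setOf_eq]
    rw [hWeq]
    exact le_spanLines hL
  exact subset_antisymm hT (Set.compl_subset_comm.mp hsub)

lemma W_of_cycle (hk : k ≤ n) (ρ : Submodule Fq (Fin n → Fq) → ℕ)
    (hρ : ∀ X : Submodule Fq (Fin n → Fq), ρ X = min (Module.finrank Fq ↥X) k)
    {i : ℕ} (hi1 : 1 ≤ i) (hik : i ≤ k) (S : Set (ProjLine Fq n))
    (hc : IsClDualCycle ρ S) (hnul : clDualNullity ρ S = i) :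
    Module.finrank Fq ↥(spanLines Sᶜ) = k - i ∧
      S = {L : ProjLine Fq n | L.1 ≤ spanLines Sᶜ}ᶜ := by
  have hnul' := hnul
  rw [nullity_eq hk ρ hρ] at hnul'
  have hf : Module.finrank Fq ↥(spanLines Sᶜ) = k - i := by
    have := min_le_right (Module.finrank Fq ↥(spanLines Sᶜ)) k
    omega
  refine ⟨hf, ?_⟩
  have hsub2 : Sᶜ ⊆ {L : ProjLine Fq n | L.1 ≤ spanLines Sᶜ} := fun L hL => le_spanLines hL
  have hsub : {L : ProjLine Fq n | L.1 ≤ spanLines Sᶜ}ᶜ ⊆ S :=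
    Set.compl_subset_comm.mpr hsub2
  have hTnul : clDualNullity ρ ({L : ProjLine Fq n | L.1 ≤ spanLines Sᶜ}ᶜ) =
      clDualNullity ρ S := by
    rw [hnul, nullity_eq hk ρ hρ, compl_compl, spanLines_setOf_le, hf]
    omega
  exact (hc _ hsub hTnul).symm

lemma lines_ncard (W : Submodule Fq (Fin n → Fq)) :
    {L : ProjLine Fq n | L.1 ≤ W}.ncard =
      ∑ j ∈ range (Module.finrank Fq ↥W), Fintype.card Fq ^ j := by
  rw [← Nat.card_coe_set_eq]
  have e : ↥{L : ProjLine Fq n | L.1 ≤ W} ≃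
      {p : Submodule Fq (Fin n → Fq) // Module.finrank Fq ↥p = 1 ∧ p ≤ W} :=
    { toFun := fun L => ⟨L.1.1, L.1.2, L.2⟩
      invFun := fun p => ⟨⟨p.1, p.2.1⟩, p.2.2⟩
      left_inv := fun L => rfl
      right_inv := fun p => rfl }
  rw [Nat.card_congr e, card_lines_le]

end Matroid

end Stmt18Aux

open Stmt18Aux

/-- for the uniform `q`-matroid `U(k,n)` on `F_q^n`, the number
of cycles of `Cl(M)*` of nullity `i` (for `1 ≤ i ≤ k`) is the Gaussian binomial
coefficient `[n choose n−k+i]_q`, and each such cycle has cardinality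
`q^{n−1} + q^{n−2} + ⋯ + q^{k−i}`. -/
theorem stmt_18 {Fq : Type*} [Field Fq] [Fintype Fq] {n k : ℕ} (hk : k ≤ n)
    (ρ : Submodule Fq (Fin n → Fq) → ℕ)
    (hρ : ∀ X : Submodule Fq (Fin n → Fq), ρ X = min (Module.finrank Fq ↥X) k) :
    ∀ i : ℕ, 1 ≤ i → i ≤ k →
      Set.ncard {S : Set (ProjLine Fq n) |
          IsClDualCycle ρ S ∧ clDualNullity ρ S = i} =
        gaussBinom (Fintype.card Fq) n (n - k + i) ∧
      ∀ S : Set (ProjLine Fq n), IsClDualCycle ρ S → clDualNullity ρ S = i →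
        S.ncard = ∑ j ∈ Finset.Ico (k - i) n, Fintype.card Fq ^ j := by
  intro i hi1 hik
  have hq2 : 2 ≤ Fintype.card Fq := Fintype.one_lt_card
  have hrk : Module.finrank Fq (Fin n → Fq) = n := finrank_fun_eq
  set q := Fintype.card Fq with hq
  set d := k - i with hd
  set e := n - k + i with he
  have hdn : d ≤ n := by omega
  have hen : e ≤ n := by omega
  have hde : n - d = e := by omega
  constructor
  · -- counting
    have hset : {S : Set (ProjLine Fq n) | IsClDualCycle ρ S ∧ clDualNullity ρ S = i} =
        (fun W : Submodule Fq (Fin n → Fq) => {L : ProjLine Fq n | L.1 ≤ W}ᶜ) ''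
          {W : Submodule Fq (Fin n → Fq) | Module.finrank Fq ↥W = d} := by
      ext S
      constructor
      · rintro ⟨hc, hnul⟩
        obtain ⟨hf, hS⟩ := W_of_cycle hk ρ hρ hi1 hik S hc hnul
        exact ⟨spanLines Sᶜ, hf, hS.symm⟩
      · rintro ⟨W, hW, rfl⟩
        exact cycle_of_W hk ρ hρ hi1 hik W hW
    have hinj : Set.InjOn (fun W : Submodule Fq (Fin n → Fq) =>
        {L : ProjLine Fq n | L.1 ≤ W}ᶜ) {W | Module.finrank Fq ↥W = d} := by
      intro W1 _ W2 _ h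
      have h2 : {L : ProjLine Fq n | L.1 ≤ W1} = {L : ProjLine Fq n | L.1 ≤ W2} := by
        have := congrArg compl h
        simpa [compl_compl] using this
      calc W1 = spanLines {L : ProjLine Fq n | L.1 ≤ W1} := (spanLines_setOf_le W1).symm
        _ = spanLines {L : ProjLine Fq n | L.1 ≤ W2} := by rw [h2]
        _ = W2 := spanLines_setOf_le W2
    rw [hset, Set.ncard_image_of_injOn hinj]
    have hncard : {W : Submodule Fq (Fin n → Fq) | Module.finrank Fq ↥W = d}.ncard =
        Nat.card {W : Submodule Fq (Fin n → Fq) // Module.finrank Fq ↥W = d} := by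
      rw [← Nat.card_coe_set_eq]
      rfl
    rw [hncard]
    -- now the numeric computation
    have hcast : ∀ m d : ℕ, d ≤ m →
        ((∏ j ∈ Finset.range d, (q ^ m - q ^ j) : ℕ) : ℤ) = Pz q m d := by
      intro m d hdm
      rw [Nat.cast_prod, Pz]
      refine Finset.prod_congr rfl fun j hj => ?_
      have hle : q ^ j ≤ q ^ m :=
        Nat.pow_le_pow_right (by omega) ((Finset.mem_range.mp hj).le.trans hdm)
      push_cast [Nat.cast_sub hle]
      ring
    have hN := grass_card (K := Fq) (V := Fin n → Fq) d (by rw [hrk]; omega)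
    rw [hrk] at hN
    have hNz : (Nat.card {W : Submodule Fq (Fin n → Fq) // Module.finrank Fq ↥W = d} : ℤ)
        * Pz q d d = Pz q n d := by
      have hc := congrArg (Nat.cast : ℕ → ℤ) hN
      rw [Nat.cast_mul, hcast d d le_rfl, hcast n d hdn] at hc
      exact hc
    have hG := gauss_mul hq2 n e
    have hsym := pz_symm hq2 hdn
    rw [hde] at hsym
    have hPd : Pz q d d ≠ 0 := (Pz_dd_pos hq2 d).ne'
    have hPe : Pz q e e ≠ 0 := (Pz_dd_pos hq2 e).ne'
    have key : (Nat.card {W : Submodule Fq (Fin n → Fq) // Module.finrank Fq ↥W = d} : ℤ)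
        = (gaussBinom q n e : ℤ) := by
      apply mul_right_cancel₀ (mul_ne_zero hPd hPe)
      calc (Nat.card {W : Submodule Fq (Fin n → Fq) // Module.finrank Fq ↥W = d} : ℤ)
            * (Pz q d d * Pz q e e)
          = ((Nat.card {W : Submodule Fq (Fin n → Fq) // Module.finrank Fq ↥W = d} : ℤ)
            * Pz q d d) * Pz q e e := by ring
        _ = Pz q n d * Pz q e e := by rw [hNz]
        _ = Pz q n e * Pz q d d := hsym
        _ = ((gaussBinom q n e : ℤ) * Pz q e e) * Pz q d d := by rw [hG]
        _ = (gaussBinom q n e : ℤ) * (Pz q d d * Pz q e e) := by ring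
    exact_mod_cast key
  · -- cardinality of each cycle
    intro S hc hnul
    obtain ⟨hf, hS⟩ := W_of_cycle hk ρ hρ hi1 hik S hc hnul
    have hcompl : Sᶜ = {L : ProjLine Fq n | L.1 ≤ spanLines Sᶜ} := by
      conv_lhs => rw [hS]
      rw [compl_compl]
    have h1 : Sᶜ.ncard = ∑ j ∈ Finset.range d, q ^ j := by
      rw [hcompl, lines_ncard, hf]
    have h2 : S.ncard + Sᶜ.ncard = Nat.card (ProjLine Fq n) :=
      Set.ncard_add_ncard_compl S
    have h3 : Nat.card (ProjLine Fq n) = ∑ j ∈ Finset.range n, q ^ j := by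
      rw [← Set.ncard_univ]
      have : (Set.univ : Set (ProjLine Fq n)) = {L : ProjLine Fq n | L.1 ≤ ⊤} :=
        (Set.eq_univ_of_forall fun L => Set.mem_setOf.mpr le_top).symm
      rw [this, lines_ncard, finrank_top, hrk]
    have h4 : ∑ j ∈ Finset.range d, q ^ j + ∑ j ∈ Finset.Ico d n, q ^ j
        = ∑ j ∈ Finset.range n, q ^ j :=
      Finset.sum_range_add_sum_Ico (fun j => q ^ j) hdn
    omega
end
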